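/- arXiv:2603.08213 — 5 statements merged into one kernel-verified Lean document; each statement's English description precedes it below -/
import Mathlib

section
/- For every natural number k ≥ 4, the minimum distance of the code L_k is 4: every nonzero codeword c ·ᵥ G_{L_k} with c ∈ 𝔽₂^k, c ≠ 0, has Hamming weight at least 4, and some nonzero codeword has Hamming weight exactly 4. -/
open Matrix

def Gmat (k : ℕ) : Matrix (Fin k) (Fin k) (ZMod 2) :=
  fun i j => if i = j then 0 else 1

/-- Generator matrix of the code `L_k`: the block matrix `[I_k | G_k]`. -/
def GLk (k : ℕ) : Matrix (Fin k) (Fin k ⊕ Fin k) (ZMod 2) :=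
  Matrix.fromCols 1 (Gmat k)

def wt {n : Type*} [Fintype n] (v : n → ZMod 2) : ℕ :=
  (Finset.univ.filter fun j => v j ≠ 0).card

/-!
Writing `s = ∑ i, c i`, the codeword `c ᵥ* [I_k | G_k]` is `(c, s • 𝟙 + c)`, and `s` is the parity
of the weight `|c|`. If `|c|` is even the second block is `c` again, so the codeword has weight
`2 |c|`, which is at least `4` once `c ≠ 0`, and equals `4` when `|c| = 2`. If `|c|` is odd the
second block is the complement of `c`, so the codeword has weight `|c| + (k - |c|) = k ≥ 4`.
-/

section Weight

variable {n : Type*} [Fintype n]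

theorem wt_eq_hammingNorm (v : n → ZMod 2) : wt v = hammingNorm v := rfl

theorem wt_le_card (v : n → ZMod 2) : wt v ≤ Fintype.card n := hammingNorm_le_card_fintype

theorem wt_sumElim {m : Type*} [Fintype m] (u : n → ZMod 2) (v : m → ZMod 2) :
    wt (Sum.elim u v) = wt u + wt v := by
  classical
  simp only [wt, ← Finset.card_toLeft_add_card_toRight]
  congr 2 <;> ext <;> simp

theorem sum_eq_wt (v : n → ZMod 2) : ∑ i, v i = (wt v : ZMod 2) := by
  classical
  rw [wt, ← Finset.sum_filter_ne_zero, Finset.card_eq_sum_ones, Nat.cast_sum]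
  exact Finset.sum_congr rfl fun i hi => Fin.eq_one_of_ne_zero _ (Finset.mem_filter.1 hi).2

theorem wt_one_add (v : n → ZMod 2) : wt (fun j => 1 + v j) = Fintype.card n - wt v := by
  have h : ∀ x : ZMod 2, 1 + x ≠ 0 ↔ ¬ x ≠ 0 := by decide
  simp only [wt, h]
  have hsplit := Finset.card_filter_add_card_filter_not (s := Finset.univ) (fun j => v j ≠ 0)
  rw [Finset.card_univ] at hsplit
  omega

theorem wt_indicator [DecidableEq n] (s : Finset n) :
    wt (fun i => if i ∈ s then (1 : ZMod 2) else 0) = s.card := by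
  simp [wt]

end Weight

theorem Gmat_eq_allOnes_sub_one (k : ℕ) : Gmat k = Matrix.of (fun _ _ => 1) - 1 := by
  ext i j
  by_cases h : i = j <;> simp [Gmat, h]

theorem vecMul_GLk (k : ℕ) (c : Fin k → ZMod 2) :
    c ᵥ* GLk k = Sum.elim c (fun j => (∑ i, c i) + c j) := by
  rw [GLk, vecMul_fromCols, vecMul_one, Gmat_eq_allOnes_sub_one, vecMul_sub, vecMul_one]
  congr 1
  ext j
  simp [vecMul, dotProduct, sub_eq_add_neg, ZMod.neg_eq_self_mod_two]

theorem wt_vecMul_GLk (k : ℕ) (c : Fin k → ZMod 2) :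
    wt (c ᵥ* GLk k) = if Even (wt c) then 2 * wt c else k := by
  rw [vecMul_GLk, wt_sumElim, sum_eq_wt]
  split_ifs with h
  · simp [ZMod.natCast_eq_zero_iff_even.2 h, two_mul]
  · have hc : wt c ≤ k := (wt_le_card c).trans_eq (Fintype.card_fin k)
    rw [ZMod.natCast_eq_one_iff_odd.2 (Nat.not_even_iff_odd.1 h), wt_one_add, Fintype.card_fin]
    omega

/-- For k ≥ 4, the minimum distance of `L_k` is 4. -/
theorem minDistance_Lk_eq_four (k : ℕ) (hk : 4 ≤ k) :
    (∀ c : Fin k → ZMod 2, c ≠ 0 → 4 ≤ wt (Matrix.vecMul c (GLk k))) ∧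
    (∃ c : Fin k → ZMod 2, c ≠ 0 ∧ wt (Matrix.vecMul c (GLk k)) = 4) := by
  refine ⟨fun c hc => ?_, ?_⟩
  · have hpos : wt c ≠ 0 := by rwa [wt_eq_hammingNorm, hammingNorm_ne_zero_iff]
    rw [wt_vecMul_GLk]
    split_ifs with h
    · obtain ⟨r, hr⟩ := h
      omega
    · exact hk
  · obtain ⟨s, -, hs⟩ := Finset.exists_subset_card_eq (s := (Finset.univ : Finset (Fin k))) (n := 2)
      (by rw [Finset.card_univ, Fintype.card_fin]; omega)
    refine ⟨fun i => if i ∈ s then 1 else 0, ?_, ?_⟩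
    · rw [← hammingNorm_ne_zero_iff, ← wt_eq_hammingNorm, wt_indicator, hs]
      exact two_ne_zero
    · rw [wt_vecMul_GLk, wt_indicator, hs, if_pos even_two]
end

section
/- For every natural number k ≥ 1, the null space {v ∈ 𝔽₂^{3k} : H_{L_k^+} · v = 0} coincides with the 𝔽₂-span of the rows of G_{L_k^+}; in particular, the code L_k^+ (the row space of G_{L_k^+}) has 𝔽₂-dimension exactly k. -/
open Matrix

/-- Generator matrix of the code `L_k^+`: the block matrix `[I_k | G_k | I_k]`. -/
def GLkp (k : ℕ) : Matrix (Fin k) (Fin k ⊕ Fin k ⊕ Fin k) (ZMod 2) :=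
  Matrix.fromCols 1 (Matrix.fromCols (Gmat k) 1)

/-- Parity-check matrix of the code `L_k^+`:
the block matrix `[[G_k, I_k, 0_k], [I_k, 0_k, I_k]]`. -/
def HLkp (k : ℕ) : Matrix (Fin k ⊕ Fin k) (Fin k ⊕ Fin k ⊕ Fin k) (ZMod 2) :=
  Matrix.fromRows
    (Matrix.fromCols (Gmat k) (Matrix.fromCols 1 0))
    (Matrix.fromCols 1 (Matrix.fromCols 0 1))


/-! Over any commutative ring, `[[A, 1, 0], [1, 0, 1]] v = 0` says exactly that `v = (x, -A x, -x)`,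
and these are the vectors `x ᵥ* [1 | -Aᵀ | -1]`. Over `𝔽₂` the signs disappear and `G_k` is
symmetric, so this generator is `G_{L_k^+}`; its leading identity block makes `x ↦ x ᵥ* G_{L_k^+}`
injective, whence the dimension `k`. -/

section SystematicCode

variable {R : Type*} [CommRing R] {m n : Type*} [Fintype n] [DecidableEq n]

lemma fromRows_fromCols_mulVec_sumElim [Fintype m] [DecidableEq m] (A : Matrix m n R)
    (x : n → R) (y : m → R) (z : n → R) :
    fromRows (fromCols A (fromCols 1 (0 : Matrix m n R)))
        (fromCols (1 : Matrix n n R) (fromCols 0 1)) *ᵥ Sum.elim x (Sum.elim y z) =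
      Sum.elim (A *ᵥ x + y) (x + z) := by
  simp only [fromRows_mulVec, fromCols_mulVec_sumElim, one_mulVec, zero_mulVec, add_zero,
    zero_add]

theorem ker_mulVecLin_eq_range_vecMulLinear [Fintype m] [DecidableEq m] (A : Matrix m n R) :
    LinearMap.ker (mulVecLin
        (fromRows (fromCols A (fromCols 1 (0 : Matrix m n R)))
          (fromCols (1 : Matrix n n R) (fromCols 0 1)))) =
      LinearMap.range (vecMulLinear (fromCols 1 (fromCols (-Aᵀ) (-1 : Matrix n n R)))) := by
  ext v
  obtain ⟨x, y, z, rfl⟩ : ∃ x y z, v = Sum.elim x (Sum.elim y z) :=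
    ⟨v ∘ Sum.inl, v ∘ Sum.inr ∘ Sum.inl, v ∘ Sum.inr ∘ Sum.inr, by ext (_ | _ | _) <;> rfl⟩
  rw [LinearMap.mem_ker, mulVecLin_apply, fromRows_fromCols_mulVec_sumElim]
  simp [← Sum.elim_zero_zero, Sum.elim_eq_iff, vecMul_neg, vecMul_transpose,
    add_eq_zero_iff_neg_eq]

lemma vecMulLinear_one_fromCols_injective (B : Matrix n m R) :
    Function.Injective (vecMulLinear (fromCols (1 : Matrix n n R) B)) := fun x y h => by
  simpa using congrArg (· ∘ Sum.inl) h

end SystematicCode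

lemma Gmat_transpose (k : ℕ) : (Gmat k)ᵀ = Gmat k := by
  ext i j
  simp [Gmat, eq_comm]

lemma GLkp_eq_fromCols_neg (k : ℕ) :
    GLkp k = fromCols 1 (fromCols (-(Gmat k)ᵀ) (-1)) := by
  have neg_eq_self (M : Matrix (Fin k) (Fin k) (ZMod 2)) : -M = M := by
    ext
    exact ZMod.neg_eq_self_mod_two _
  rw [Gmat_transpose, neg_eq_self, neg_eq_self, GLkp]

theorem nullSpace_HLkp_eq_rowSpace_GLkp_general (k : ℕ) :
    LinearMap.ker (Matrix.mulVecLin (HLkp k)) =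
      Submodule.span (ZMod 2) (Set.range (GLkp k)) ∧
    Module.finrank (ZMod 2)
      ↥(Submodule.span (ZMod 2) (Set.range (GLkp k))) = k := by
  have span_eq_range : Submodule.span (ZMod 2) (Set.range (GLkp k)) =
      LinearMap.range (vecMulLinear (GLkp k)) :=
    (range_vecMulLinear (GLkp k)).symm
  rw [span_eq_range]
  constructor
  · rw [HLkp, ker_mulVecLin_eq_range_vecMulLinear, GLkp_eq_fromCols_neg]
  · rw [GLkp, LinearMap.finrank_range_of_inj (vecMulLinear_one_fromCols_injective _)]
    exact Module.finrank_fin_fun (ZMod 2)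

/-- For `k ≥ 1`, the null space of `H_{L_k^+}` equals the row space of `G_{L_k^+}`,
and this row space has dimension `k`. -/
theorem nullSpace_HLkp_eq_rowSpace_GLkp (k : ℕ) (hk : 1 ≤ k) :
    LinearMap.ker (Matrix.mulVecLin (HLkp k)) =
      Submodule.span (ZMod 2) (Set.range (GLkp k)) ∧
    Module.finrank (ZMod 2)
      ↥(Submodule.span (ZMod 2) (Set.range (GLkp k))) = k :=
  nullSpace_HLkp_eq_rowSpace_GLkp_general k
end

section
/- Hypergraph product orthogonality: let H₁ be an r₁×n₁ matrix and H₂ an r₂×n₂ matrix over 𝔽₂ = ZMod 2, and define the block matrices H_X = [H₁ ⊗ I_{n₂} | I_{r₁} ⊗ H₂ᵀ] (of size r₁n₂ × (n₁n₂ + r₁r₂)) and H_Z = [I_{n₁} ⊗ H₂ | H₁ᵀ ⊗ I_{r₂}] (of size n₁r₂ × (n₁n₂ + r₁r₂)), where ⊗ denotes the Kronecker product. Then H_X · H_Zᵀ = 0 over 𝔽₂. -/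
open Matrix Kronecker

namespace Matrix

variable {R ι κ m n : Type*} [Fintype ι] [Fintype κ] [Fintype m] [Fintype n]
  [DecidableEq ι] [DecidableEq κ] [DecidableEq m] [DecidableEq n]

def hypergraphProductX [Zero R] [One R] [Mul R] (H₁ : Matrix ι m R) (H₂ : Matrix κ n R) :
    Matrix (ι × n) ((m × n) ⊕ (ι × κ)) R :=
  fromCols (H₁ ⊗ₖ 1) (1 ⊗ₖ H₂ᵀ)

def hypergraphProductZ [Zero R] [One R] [Mul R] (H₁ : Matrix ι m R) (H₂ : Matrix κ n R) :
    Matrix (m × κ) ((m × n) ⊕ (ι × κ)) R :=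
  fromCols (1 ⊗ₖ H₂) (H₁ᵀ ⊗ₖ 1)

theorem hypergraphProductX_mul_transpose_hypergraphProductZ [CommSemiring R]
    (H₁ : Matrix ι m R) (H₂ : Matrix κ n R) :
    hypergraphProductX H₁ H₂ * (hypergraphProductZ H₁ H₂)ᵀ = 2 • (H₁ ⊗ₖ H₂ᵀ) := by
  -- both terms of the block product are `H₁ ⊗ H₂ᵀ` by the mixed-product rule
  rw [hypergraphProductX, hypergraphProductZ, transpose_fromCols, fromCols_mul_fromRows,
    ← kroneckerMap_transpose, ← kroneckerMap_transpose, transpose_one, transpose_one,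
    transpose_transpose, ← mul_kronecker_mul, ← mul_kronecker_mul, Matrix.one_mul, Matrix.mul_one,
    Matrix.one_mul, Matrix.mul_one, two_nsmul]

theorem hypergraphProductX_mul_transpose_hypergraphProductZ_eq_zero [CommSemiring R]
    [CharP R 2] (H₁ : Matrix ι m R) (H₂ : Matrix κ n R) :
    hypergraphProductX H₁ H₂ * (hypergraphProductZ H₁ H₂)ᵀ = 0 := by
  rw [hypergraphProductX_mul_transpose_hypergraphProductZ, ← Nat.cast_smul_eq_nsmul R,
    CharP.cast_eq_zero, zero_smul]

end Matrix

/-- Hypergraph product orthogonality: with `H_X = [H₁ ⊗ I_{n₂} | I_{r₁} ⊗ H₂ᵀ]` and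
`H_Z = [I_{n₁} ⊗ H₂ | H₁ᵀ ⊗ I_{r₂}]`, we have `H_X · H_Zᵀ = 0` over 𝔽₂. -/
theorem hypergraphProduct_orthogonality (r₁ n₁ r₂ n₂ : ℕ)
    (H₁ : Matrix (Fin r₁) (Fin n₁) (ZMod 2))
    (H₂ : Matrix (Fin r₂) (Fin n₂) (ZMod 2)) :
    Matrix.fromCols (H₁ ⊗ₖ (1 : Matrix (Fin n₂) (Fin n₂) (ZMod 2)))
        ((1 : Matrix (Fin r₁) (Fin r₁) (ZMod 2)) ⊗ₖ H₂ᵀ) *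
      (Matrix.fromCols ((1 : Matrix (Fin n₁) (Fin n₁) (ZMod 2)) ⊗ₖ H₂)
        (H₁ᵀ ⊗ₖ (1 : Matrix (Fin r₂) (Fin r₂) (ZMod 2))))ᵀ = 0 :=
  hypergraphProductX_mul_transpose_hypergraphProductZ_eq_zero H₁ H₂
end

section
/- CSS condition for the quantum code QL_k: for every natural number k, the matrices H_X = H_{L_k} ⊗ I_{3k} and H_Z = G_{L_k} ⊗ H_{L_k^+} over 𝔽₂ satisfy H_X · H_Zᵀ = 0 (the zero 3k² × 2k² matrix). -/
open Matrix Kronecker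

/-- Parity-check matrix of the code `L_k`: the block matrix `[G_k | I_k]`. -/
def HLk (k : ℕ) : Matrix (Fin k) (Fin k ⊕ Fin k) (ZMod 2) :=
  Matrix.fromCols (Gmat k) 1

/-- The X-type stabilizer matrix of the quantum code `QL_k`: `H_X = H_{L_k} ⊗ I_{3k}`,
a `3k² × 6k²` matrix over 𝔽₂ (the `3k`-element index set is `Fin k ⊕ Fin k ⊕ Fin k`). -/
def HXq (k : ℕ) :
    Matrix (Fin k × (Fin k ⊕ Fin k ⊕ Fin k))
      ((Fin k ⊕ Fin k) × (Fin k ⊕ Fin k ⊕ Fin k)) (ZMod 2) :=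
  HLk k ⊗ₖ (1 : Matrix (Fin k ⊕ Fin k ⊕ Fin k) (Fin k ⊕ Fin k ⊕ Fin k) (ZMod 2))

/-- The Z-type stabilizer matrix of the quantum code `QL_k`: `H_Z = G_{L_k} ⊗ H_{L_k^+}`,
a `2k² × 6k²` matrix over 𝔽₂. -/
def HZq (k : ℕ) :
    Matrix (Fin k × (Fin k ⊕ Fin k))
      ((Fin k ⊕ Fin k) × (Fin k ⊕ Fin k ⊕ Fin k)) (ZMod 2) :=
  GLk k ⊗ₖ HLkp k

/-! By the mixed-product rule, `H_X H_Zᵀ = (H_{L_k} G_{L_k}ᵀ) ⊗ H_{L_k^+}ᵀ`, and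
`H_{L_k} G_{L_k}ᵀ = G_k + G_kᵀ` vanishes over `𝔽₂` because `G_k` is symmetric. -/

theorem Matrix.fromCols_one_mul_fromCols_one_transpose {m n R : Type*} [Fintype m] [Fintype n]
    [DecidableEq m] [DecidableEq n] [Semiring R] (A : Matrix m n R) (B : Matrix n m R) :
    fromCols A (1 : Matrix m m R) * (fromCols (1 : Matrix n n R) B)ᵀ = A + Bᵀ := by
  rw [transpose_fromCols, fromCols_mul_fromRows, transpose_one, Matrix.mul_one, Matrix.one_mul]

theorem Matrix.IsSymm.add_transpose_eq_zero {n R : Type*} [Semiring R] [CharP R 2]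
    {A : Matrix n n R} (hA : A.IsSymm) : A + Aᵀ = 0 := by
  rw [hA.eq]
  ext i j
  exact CharTwo.add_self_eq_zero _

theorem Gmat_isSymm (k : ℕ) : (Gmat k).IsSymm := by
  ext i j
  simp [Gmat, eq_comm]

theorem HLk_mul_GLk_transpose (k : ℕ) : HLk k * (GLk k)ᵀ = 0 :=
  (fromCols_one_mul_fromCols_one_transpose _ _).trans (Gmat_isSymm k).add_transpose_eq_zero

/-- CSS condition for `QL_k`: `H_X · H_Zᵀ = 0`. -/
theorem HXq_mul_HZq_transpose_eq_zero (k : ℕ) :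
    HXq k * (HZq k)ᵀ = 0 := by
  rw [HXq, HZq, ← kroneckerMap_transpose, ← mul_kronecker_mul, HLk_mul_GLk_transpose,
    zero_kronecker]
end

section
/- For every natural number k ≥ 1, the 𝔽₂-rank of the matrix H_Z = G_{L_k} ⊗ H_{L_k^+} equals 2k². -/
/-!
Both Kronecker factors of `H_Z` have explicit right inverses over 𝔽₂: `[I | G] [I; 0] = I`, and
`[[G, I, 0], [I, 0, I]] [0; [I, 0]; [0, I]] = I`. Since `(A ⊗ B)(C ⊗ D) = AC ⊗ BD`, `H_Z` has a right
inverse too, so its `2k²` rows are independent.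
-/

open Matrix Kronecker

theorem Matrix.rank_eq_card_height_of_mul_eq_one {m n R : Type*} [Fintype m] [Fintype n]
    [DecidableEq m] [CommRing R] [StrongRankCondition R]
    (A : Matrix m n R) (B : Matrix n m R) (hAB : A * B = 1) :
    A.rank = Fintype.card m :=
  le_antisymm (rank_le_card_height A) <| calc
    Fintype.card m = (A * B).rank := by rw [hAB, rank_one]
    _ ≤ A.rank := rank_mul_le_left A B

def GLkRightInv (k : ℕ) : Matrix (Fin k ⊕ Fin k) (Fin k) (ZMod 2) :=
  fromRows 1 0

def HLkpRightInv (k : ℕ) : Matrix (Fin k ⊕ Fin k ⊕ Fin k) (Fin k ⊕ Fin k) (ZMod 2) :=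
  fromRows 0 (fromRows (fromCols 1 0) (fromCols 0 1))

theorem GLk_mul_GLkRightInv (k : ℕ) : GLk k * GLkRightInv k = 1 := by
  simp [GLk, GLkRightInv, fromCols_mul_fromRows]

theorem HLkp_mul_HLkpRightInv (k : ℕ) : HLkp k * HLkpRightInv k = 1 := by
  rw [HLkp, HLkpRightInv, fromRows_mul, fromCols_mul_fromRows, fromCols_mul_fromRows,
    fromCols_mul_fromRows]
  simp [fromRows_fromCols_eq_fromBlocks, fromBlocks_one]

theorem HZq_mul_rightInv (k : ℕ) : HZq k * (GLkRightInv k ⊗ₖ HLkpRightInv k) = 1 := by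
  rw [HZq, ← mul_kronecker_mul, GLk_mul_GLkRightInv, HLkp_mul_HLkpRightInv, one_kronecker_one]

theorem rank_HZq_general (k : ℕ) : (HZq k).rank = 2 * k ^ 2 := by
  rw [rank_eq_card_height_of_mul_eq_one _ _ (HZq_mul_rightInv k)]
  simp only [Fintype.card_prod, Fintype.card_sum, Fintype.card_fin]
  ring

/-- For `k ≥ 1`, the 𝔽₂-rank of `H_Z = G_{L_k} ⊗ H_{L_k^+}` equals `2k²`. -/
theorem rank_HZq (k : ℕ) (hk : 1 ≤ k) : (HZq k).rank = 2 * k ^ 2 :=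
  rank_HZq_general k
end
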